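/- arXiv:1001.3130 — 2 statements merged into one kernel-verified Lean document; each statement's English description precedes it below -/
import Mathlib

section
/- Let Y be a real-valued stochastic process and t ∈ ℝ. Suppose Y(t+r) − Y(t) is symmetrically distributed for every r, and there exist ε₀ > 0 and h(t) > 0 such that M := sup over r ∈ (0, ε₀) of ∫₀^∞ |φ_{(Y(t+r)−Y(t))/r^{h(t)}}(v)| dv < ∞, where φ_Z denotes the characteristic function of Z. Then there exists K > 0 (depending only on t and ε₀) such that for all x > 0 and all r ∈ (0, ε₀), P(|Y(t+r) − Y(t)| < x) ≤ K · x / r^{h(t)}. -/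
/-!
Write `W = (Y(t+r) - Y(t)) / r^h` and `ν` for its law. The Fejér kernel
`F_a(w) = (1 - cos (a w)) / w²` is nonnegative and at least `2 a² / π²` on `|a w| ≤ π`, and it is
the cosine transform of the tent `(a - v)` on `[0, a]`. By Fubini, `∫ F_a dν` is therefore
`∫₀^a (a - v) Re φ_ν(v) dv ≤ a ∫₀^∞ |φ_ν| ≤ a M`. With `a = π / b` this gives
`P(|W| ≤ b) ≤ (π / 2) M b`, and `b = x / r^h` gives the claim.
-/

open MeasureTheory Set

/-- The characteristic function of a real random variable `Z` under measure `μ`. -/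
noncomputable def charFn {Ω : Type*} [MeasurableSpace Ω] (μ : Measure Ω) (Z : Ω → ℝ) (v : ℝ) : ℂ :=
  ∫ ω, Complex.exp (((v * Z ω : ℝ) : ℂ) * Complex.I) ∂μ

open Real

/-- Written as the cosine transform of the tent `v ↦ a - v` on `[0, a]`, so that Fubini turns its
mean under a measure into an integral of the characteristic function. -/
noncomputable def fejerKernel (a w : ℝ) : ℝ :=
  ∫ v in (0:ℝ)..a, (a - v) * cos (v * w)

lemma fejerKernel_of_ne_zero (a : ℝ) {w : ℝ} (hw : w ≠ 0) :
    fejerKernel a w = (1 - cos (a * w)) / w ^ 2 := by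
  have hderiv : ∀ v ∈ uIcc (0:ℝ) a,
      HasDerivAt (fun v => (a - v) * sin (v * w) / w - cos (v * w) / w ^ 2)
        ((a - v) * cos (v * w)) v := by
    intro v _
    have hvw : HasDerivAt (fun v : ℝ => v * w) w v := hasDerivAt_mul_const w
    refine ((((hasDerivAt_id' v).const_sub a).mul hvw.sin).div_const w |>.sub
      (hvw.cos.div_const (w ^ 2))).congr_deriv ?_
    field_simp
    ring
  rw [fejerKernel, intervalIntegral.integral_eq_sub_of_hasDerivAt hderiv
    (Continuous.intervalIntegrable (by fun_prop) 0 a)]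
  field_simp
  simp only [sub_self, mul_zero, zero_mul, zero_sub, sub_zero, sin_zero, cos_zero, sub_neg_eq_add]
  ring

lemma fejerKernel_zero (a : ℝ) : fejerKernel a 0 = a ^ 2 / 2 := by
  simp [fejerKernel, intervalIntegral.integral_comp_sub_left (fun v => v)]

lemma fejerKernel_nonneg (a w : ℝ) : 0 ≤ fejerKernel a w := by
  rcases eq_or_ne w 0 with rfl | hw
  · rw [fejerKernel_zero]; positivity
  · rw [fejerKernel_of_ne_zero a hw]
    have := cos_le_one (a * w)
    exact div_nonneg (by linarith) (by positivity)

lemma fejerKernel_le (a w : ℝ) : fejerKernel a w ≤ a ^ 2 / 2 := by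
  rcases eq_or_ne w 0 with rfl | hw
  · rw [fejerKernel_zero]
  · rw [fejerKernel_of_ne_zero a hw, div_le_iff₀ (by positivity)]
    nlinarith [one_sub_sq_div_two_le_cos (x := a * w)]

lemma two_div_pi_sq_mul_sq_le_fejerKernel {a w : ℝ} (h : |a * w| ≤ π) :
    2 / π ^ 2 * a ^ 2 ≤ fejerKernel a w := by
  rcases eq_or_ne w 0 with rfl | hw
  · rw [fejerKernel_zero]
    have : 2 / π ^ 2 ≤ 1 / 2 := by
      rw [div_le_div_iff₀ (by positivity) two_pos]; nlinarith [pi_gt_three]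
    nlinarith [sq_nonneg a]
  · rw [fejerKernel_of_ne_zero a hw, le_div_iff₀ (by positivity)]
    nlinarith [cos_le_one_sub_mul_cos_sq h]

lemma continuous_fejerKernel (a : ℝ) : Continuous (fejerKernel a) :=
  intervalIntegral.continuous_parametric_intervalIntegral_of_continuous' (by fun_prop) 0 a

lemma re_charFun (ν : Measure ℝ) [IsFiniteMeasure ν] (v : ℝ) :
    (charFun ν v).re = ∫ x, cos (v * x) ∂ν := by
  rw [charFun_apply_real, ← RCLike.re_to_complex, ← integral_re]
  · congr with x
    exact_mod_cast Complex.exp_ofReal_mul_I_re (v * x)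
  · exact Integrable.of_bound (by fun_prop) 1 (ae_of_all _ fun x => by
      exact_mod_cast (Complex.norm_exp_ofReal_mul_I (v * x)).le)

lemma integral_fejerKernel_eq (ν : Measure ℝ) [IsFiniteMeasure ν] {a : ℝ} (ha : 0 ≤ a) :
    ∫ x, fejerKernel a x ∂ν = ∫ v in (0:ℝ)..a, (a - v) * (charFun ν v).re := by
  have hint : Integrable (Function.uncurry fun v x => (a - v) * cos (v * x))
      ((volume.restrict (uIoc 0 a)).prod ν) := by
    have : IsFiniteMeasure (volume.restrict (uIoc 0 a)) := by
      rw [uIoc_of_le ha]; infer_instance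
    refine .of_bound (by fun_prop) a ?_
    filter_upwards [Measure.quasiMeasurePreserving_fst.ae (ae_restrict_mem measurableSet_uIoc)]
      with p hp
    rw [uIoc_of_le ha] at hp
    calc ‖(a - p.1) * cos (p.1 * p.2)‖ = |a - p.1| * |cos (p.1 * p.2)| := abs_mul _ _
      _ ≤ a * 1 := by
        gcongr
        · rw [abs_le]; constructor <;> linarith [hp.1, hp.2]
        · exact abs_cos_le_one _
      _ = a := mul_one a
  simp_rw [re_charFun, ← integral_const_mul]
  exact (intervalIntegral_integral_swap hint).symm

lemma intervalIntegral_sub_mul_re_charFun_le (ν : Measure ℝ) [IsFiniteMeasure ν] {a M : ℝ}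
    (ha : 0 ≤ a) (hM : 0 ≤ M)
    (h : ∫⁻ v in Ioi (0:ℝ), ENNReal.ofReal ‖charFun ν v‖ ≤ ENNReal.ofReal M) :
    ∫ v in (0:ℝ)..a, (a - v) * (charFun ν v).re ≤ a * M := by
  have hnorm : ∫ v in Ioc 0 a, ‖charFun ν v‖ ≤ M := by
    rw [integral_eq_lintegral_of_nonneg_ae (ae_of_all _ fun _ => norm_nonneg _) (by fun_prop)]
    exact ENNReal.toReal_le_of_le_ofReal hM ((lintegral_mono_set Ioc_subset_Ioi_self).trans h)
  calc ∫ v in (0:ℝ)..a, (a - v) * (charFun ν v).re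
      ≤ ∫ v in (0:ℝ)..a, a * ‖charFun ν v‖ := by
        refine intervalIntegral.integral_mono_on ha
          (Continuous.intervalIntegrable (by fun_prop) _ _)
          (Continuous.intervalIntegrable (by fun_prop) _ _) fun v hv => ?_
        calc (a - v) * (charFun ν v).re ≤ (a - v) * ‖charFun ν v‖ :=
              mul_le_mul_of_nonneg_left (Complex.re_le_norm _) (by linarith [hv.2])
          _ ≤ a * ‖charFun ν v‖ :=
              mul_le_mul_of_nonneg_right (by linarith [hv.1]) (norm_nonneg _)
    _ = a * ∫ v in Ioc 0 a, ‖charFun ν v‖ := by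
        rw [intervalIntegral.integral_const_mul, intervalIntegral.integral_of_le ha]
    _ ≤ a * M := by gcongr

lemma mul_measureReal_le_integral_fejerKernel (ν : Measure ℝ) [IsFiniteMeasure ν] (a : ℝ) :
    2 / π ^ 2 * a ^ 2 * ν.real {x | |a * x| ≤ π} ≤ ∫ x, fejerKernel a x ∂ν := by
  have hS : MeasurableSet {x | |a * x| ≤ π} := measurableSet_le (by fun_prop) (by fun_prop)
  rw [mul_comm, ← smul_eq_mul, ← integral_indicator_const _ hS]
  refine integral_mono ((integrable_const _).indicator hS)
    (.of_bound (continuous_fejerKernel a).aestronglyMeasurable (a ^ 2 / 2)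
      (ae_of_all _ fun x => ?_))
    fun x => ?_
  · rw [Real.norm_of_nonneg (fejerKernel_nonneg a x)]; exact fejerKernel_le a x
  · by_cases hx : x ∈ {x | |a * x| ≤ π}
    · rw [indicator_of_mem hx]; exact two_div_pi_sq_mul_sq_le_fejerKernel hx
    · rw [indicator_of_notMem hx]; exact fejerKernel_nonneg a x

lemma measureReal_abs_le_le_of_lintegral_norm_charFun_le (ν : Measure ℝ) [IsFiniteMeasure ν]
    {b M : ℝ} (hb : 0 < b) (hM : 0 ≤ M)
    (h : ∫⁻ v in Ioi (0:ℝ), ENNReal.ofReal ‖charFun ν v‖ ≤ ENNReal.ofReal M) :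
    ν.real {x | |x| ≤ b} ≤ π / 2 * M * b := by
  set a := π / b with ha
  have ha0 : 0 < a := by positivity
  have hset : {x | |x| ≤ b} = {x | |a * x| ≤ π} := by
    ext x
    change |x| ≤ b ↔ |a * x| ≤ π
    rw [abs_mul, abs_of_pos ha0, ha, div_mul_eq_mul_div, div_le_iff₀ hb,
      mul_le_mul_iff_right₀ pi_pos]
  have key : 2 / π ^ 2 * a ^ 2 * ν.real {x | |x| ≤ b} ≤ a * M := by
    rw [hset]
    calc _ ≤ ∫ x, fejerKernel a x ∂ν := mul_measureReal_le_integral_fejerKernel ν a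
      _ = ∫ v in (0:ℝ)..a, (a - v) * (charFun ν v).re := integral_fejerKernel_eq ν ha0.le
      _ ≤ a * M := intervalIntegral_sub_mul_re_charFun_le ν ha0.le hM h
  rw [ha] at key
  field_simp at key
  linarith

lemma charFn_eq_charFun_map {Ω : Type*} [MeasurableSpace Ω] (μ : Measure Ω) {W : Ω → ℝ}
    (hW : AEMeasurable W μ) (v : ℝ) : charFn μ W v = charFun (μ.map W) v := by
  rw [charFun_apply_real, integral_map hW (by fun_prop), charFn]
  push_cast
  rfl

theorem stmt0_general {Ω : Type*} [MeasurableSpace Ω] (μ : Measure Ω) [IsProbabilityMeasure μ]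
    (Y : ℝ → Ω → ℝ) (t : ℝ) (ε₀ h M : ℝ)
    (hmeas : ∀ s, Measurable (Y s))
    (hbound : ∀ r ∈ Ioo (0:ℝ) ε₀,
      ∫⁻ v in Ioi (0:ℝ),
        ENNReal.ofReal ‖charFn μ (fun ω => (Y (t + r) ω - Y t ω) / r ^ h) v‖
        ≤ ENNReal.ofReal M) :
    ∃ K > 0, ∀ x > (0:ℝ), ∀ r ∈ Ioo (0:ℝ) ε₀,
      μ {ω | |Y (t + r) ω - Y t ω| < x} ≤ ENNReal.ofReal (K * x / r ^ h) := by
  refine ⟨π / 2 * max M 1, by positivity, fun x hx r hr => ?_⟩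
  have hrh : 0 < r ^ h := rpow_pos_of_pos hr.1 h
  set W : Ω → ℝ := fun ω => (Y (t + r) ω - Y t ω) / r ^ h
  have hW : Measurable W := ((hmeas _).sub (hmeas t)).div_const _
  have hchar : ∫⁻ v in Ioi (0:ℝ), ENNReal.ofReal ‖charFun (μ.map W) v‖
      ≤ ENNReal.ofReal (max M 1) := by
    simp_rw [← charFn_eq_charFun_map μ hW.aemeasurable]
    exact (hbound r hr).trans (ENNReal.ofReal_le_ofReal (le_max_left M 1))
  have hsub : {ω | |Y (t + r) ω - Y t ω| < x} ⊆ W ⁻¹' {y | |y| ≤ x / r ^ h} := fun ω hω => by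
    change |(Y (t + r) ω - Y t ω) / r ^ h| ≤ x / r ^ h
    rw [abs_div, abs_of_pos hrh]
    exact div_le_div_of_nonneg_right hω.le hrh.le
  calc μ {ω | |Y (t + r) ω - Y t ω| < x} ≤ μ.map W {y | |y| ≤ x / r ^ h} :=
        (measure_mono hsub).trans_eq
          (Measure.map_apply hW (measurableSet_le (by fun_prop) (by fun_prop))).symm
    _ = ENNReal.ofReal ((μ.map W).real {y | |y| ≤ x / r ^ h}) :=
        (ofReal_measureReal (measure_ne_top _ _)).symm
    _ ≤ ENNReal.ofReal (π / 2 * max M 1 * x / r ^ h) := ENNReal.ofReal_le_ofReal <|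
        (measureReal_abs_le_le_of_lintegral_norm_charFun_le _ (div_pos hx hrh)
          (by positivity) hchar).trans_eq (mul_div_assoc _ _ _).symm

theorem stmt0 {Ω : Type*} [MeasurableSpace Ω] (μ : Measure Ω) [IsProbabilityMeasure μ]
    (Y : ℝ → Ω → ℝ) (t : ℝ) (ε₀ h M : ℝ) (hε₀ : 0 < ε₀) (hh : 0 < h)
    (hmeas : ∀ s, Measurable (Y s))
    (hsym : ∀ r : ℝ, Measure.map (fun ω => Y (t + r) ω - Y t ω) μ
      = Measure.map (fun ω => -(Y (t + r) ω - Y t ω)) μ)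
    (hbound : ∀ r ∈ Ioo (0:ℝ) ε₀,
      ∫⁻ v in Ioi (0:ℝ),
        ENNReal.ofReal ‖charFn μ (fun ω => (Y (t + r) ω - Y t ω) / r ^ h) v‖
        ≤ ENNReal.ofReal M) :
    ∃ K > 0, ∀ x > (0:ℝ), ∀ r ∈ Ioo (0:ℝ) ε₀,
      μ {ω | |Y (t + r) ω - Y t ω| < x} ≤ ENNReal.ofReal (K * x / r ^ h) :=
  stmt0_general μ Y t ε₀ h M hmeas hbound
end

section
/- Let Y be a stochastic process on ℝ, t ∈ ℝ, h > 0, and suppose there exist K > 0, γ > h and ε₀ > 0 such that for all r ∈ (0, ε₀) and all x > 0, P(|Y(t+r) − Y(t)| < x) ≤ K·x/r^h. Then almost surely limsup_{r→0+} |Y(t+r) − Y(t)|/r^γ = +∞; in particular the pointwise Hölder exponent of Y at t, defined as H_t = sup{β : lim_{r→0} |Y(t+r)−Y(t)|/|r|^β = 0}, satisfies H_t ≤ h almost surely. -/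
/-!
Borel–Cantelli along a sequence `r_n ↓ 0` with `∑ r_n ^ (γ - h) < ∞`: the small-ball bound gives
`P(|Y(t + r_n) - Y(t)| < M r_n ^ γ) ≤ K M r_n ^ (γ - h)`, which is summable in `n` for every `M`,
so almost surely `|Y(t + r_n) - Y(t)| / r_n ^ γ → ∞`. Doing this for countably many exponents
`γ ↓ h` rules out every Hölder exponent `β > h`, since `β`-Hölder decay forces
`|Y(t + r) - Y(t)| / r ^ γ → 0` for all `γ < β`.
-/

open MeasureTheory Set Filter Topology
open scoped ENNReal

theorem exists_seq_tendsto_nhdsGT_zero_summable_rpow {c : ℝ} (hc : 0 < c) :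
    ∃ u : ℕ → ℝ, Tendsto u atTop (𝓝[>] 0) ∧ Summable fun n => u n ^ c := by
  refine ⟨fun n => (n : ℝ) ^ (-(2 / c)), ?_, ?_⟩
  · refine tendsto_nhdsWithin_iff.2 ⟨?_, ?_⟩
    · exact (tendsto_rpow_neg_atTop (by positivity)).comp tendsto_natCast_atTop_atTop
    · filter_upwards [eventually_gt_atTop 0] with n hn
      exact Real.rpow_pos_of_pos (Nat.cast_pos.2 hn) _
  · refine (Real.summable_nat_rpow.2 (show (-2 : ℝ) < -1 by norm_num)).congr fun n => ?_
    rw [← Real.rpow_mul n.cast_nonneg]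
    field_simp

theorem ae_tendsto_atTop_of_summable_measureReal_lt {Ω : Type*} [MeasurableSpace Ω]
    {μ : Measure Ω} [IsFiniteMeasure μ] {Z : ℕ → Ω → ℝ}
    (hZ : ∀ M > 0, Summable fun n => μ.real {ω | Z n ω < M}) :
    ∀ᵐ ω ∂μ, Tendsto (fun n => Z n ω) atTop atTop := by
  have hfin : ∀ M > 0, ∑' n, μ {ω | Z n ω < M} ≠ ∞ := fun M hM => by
    rw [tsum_congr fun n => (ofReal_measureReal (μ := μ) (s := {ω | Z n ω < M})).symm,
      ← ENNReal.ofReal_tsum_of_nonneg (fun _ => measureReal_nonneg) (hZ M hM)]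
    exact ENNReal.ofReal_ne_top
  have hev : ∀ᵐ ω ∂μ, ∀ m : ℕ, ∀ᶠ n in atTop, ω ∉ {ω | Z n ω < m + 1} :=
    ae_all_iff.2 fun m => ae_eventually_notMem (hfin _ (by positivity))
  filter_upwards [hev] with ω hω
  refine tendsto_atTop.2 fun b => ?_
  filter_upwards [hω ⌈b⌉₊] with n hn
  simp only [not_lt] at hn
  linarith [Nat.le_ceil b]

theorem limsup_eq_top_of_tendsto_comp {α : Type*} {g : α → ℝ≥0∞} {l : Filter α} {u : ℕ → α}
    (hu : Tendsto u atTop l) (hg : Tendsto (g ∘ u) atTop (𝓝 ∞)) : limsup g l = ∞ :=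
  top_unique <| calc
    ∞ = limsup (g ∘ u) atTop := hg.limsup_eq.symm
    _ = limsup g (map u atTop) := limsup_comp g u atTop
    _ ≤ limsup g l := limsup_le_limsup_of_le hu

section Increments

variable {Ω : Type*} [MeasurableSpace Ω] {μ : Measure Ω} {Y : ℝ → Ω → ℝ} {t h γ K ε₀ : ℝ}

theorem measureReal_abs_sub_div_rpow_lt_le (hK : 0 ≤ K)
    (hbound : ∀ r ∈ Ioo (0:ℝ) ε₀, ∀ x > (0:ℝ),
      μ {ω | |Y (t + r) ω - Y t ω| < x} ≤ ENNReal.ofReal (K * x / r ^ h))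
    {r M : ℝ} (hr : r ∈ Ioo 0 ε₀) (hM : 0 < M) :
    μ.real {ω | |Y (t + r) ω - Y t ω| / r ^ γ < M} ≤ K * M * r ^ (γ - h) := by
  have hrγ : 0 < r ^ γ := Real.rpow_pos_of_pos hr.1 γ
  simp_rw [div_lt_iff₀ hrγ]
  refine ENNReal.toReal_le_of_le_ofReal (by have := hr.1; positivity) ?_
  refine (hbound r hr _ (by positivity)).trans_eq ?_
  rw [Real.rpow_sub hr.1]
  ring_nf

theorem ae_tendsto_abs_sub_div_rpow_atTop [IsFiniteMeasure μ] (hK : 0 ≤ K) (hε₀ : 0 < ε₀)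
    (hbound : ∀ r ∈ Ioo (0:ℝ) ε₀, ∀ x > (0:ℝ),
      μ {ω | |Y (t + r) ω - Y t ω| < x} ≤ ENNReal.ofReal (K * x / r ^ h))
    {u : ℕ → ℝ} (hu : Tendsto u atTop (𝓝[>] 0)) (hsum : Summable fun n => u n ^ (γ - h)) :
    ∀ᵐ ω ∂μ, Tendsto (fun n => |Y (t + u n) ω - Y t ω| / u n ^ γ) atTop atTop := by
  refine ae_tendsto_atTop_of_summable_measureReal_lt fun M hM =>
    (hsum.mul_left (K * M)).of_norm_bounded_eventually ?_
  filter_upwards [Nat.cofinite_eq_atTop ▸ hu (Ioo_mem_nhdsGT hε₀)] with n hn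
  rw [Real.norm_of_nonneg measureReal_nonneg]
  exact measureReal_abs_sub_div_rpow_lt_le hK hbound hn hM

theorem ae_limsup_abs_sub_div_rpow_eq_top [IsFiniteMeasure μ] (hγ : h < γ) (hK : 0 ≤ K)
    (hε₀ : 0 < ε₀)
    (hbound : ∀ r ∈ Ioo (0:ℝ) ε₀, ∀ x > (0:ℝ),
      μ {ω | |Y (t + r) ω - Y t ω| < x} ≤ ENNReal.ofReal (K * x / r ^ h)) :
    ∀ᵐ ω ∂μ, limsup (fun r => ENNReal.ofReal (|Y (t + r) ω - Y t ω| / r ^ γ)) (𝓝[>] 0) = ∞ := by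
  obtain ⟨u, hu, hsum⟩ := exists_seq_tendsto_nhdsGT_zero_summable_rpow (sub_pos.2 hγ)
  filter_upwards [ae_tendsto_abs_sub_div_rpow_atTop hK hε₀ hbound hu hsum] with ω hω
  exact limsup_eq_top_of_tendsto_comp hu (ENNReal.tendsto_ofReal_atTop.comp hω)

end Increments

theorem tendsto_div_rpow_nhdsGT_of_lt {f : ℝ → ℝ} {β c : ℝ} (hcβ : c < β)
    (hf : Tendsto (fun r => f r / |r| ^ β) (𝓝[≠] 0) (𝓝 0)) :
    Tendsto (fun r => f r / r ^ c) (𝓝[>] 0) (𝓝 0) := by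
  have hpow : Tendsto (fun r : ℝ => r ^ (β - c)) (𝓝[>] 0) (𝓝 0) := by
    have := (Real.continuousAt_rpow_const 0 (β - c) (Or.inr (by linarith))).tendsto
    rw [Real.zero_rpow (by linarith)] at this
    exact this.mono_left nhdsWithin_le_nhds
  have hprod := (hf.mono_left (nhdsGT_le_nhdsNE 0)).mul hpow
  rw [mul_zero] at hprod
  refine hprod.congr' ?_
  filter_upwards [self_mem_nhdsWithin] with r (hr : 0 < r)
  rw [abs_of_pos hr, Real.rpow_sub hr]
  field_simp

theorem sSup_tendsto_div_rpow_le {f : ℝ → ℝ} {h : ℝ} (hh : 0 ≤ h)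
    (hf : ∃ᶠ c in 𝓝[>] h, limsup (fun r => ENNReal.ofReal (f r / r ^ c)) (𝓝[>] 0) = ∞) :
    sSup {β | Tendsto (fun r => f r / |r| ^ β) (𝓝[≠] 0) (𝓝 0)} ≤ h := by
  refine Real.sSup_le (fun β hβ => le_of_not_gt fun hhβ => ?_) hh
  obtain ⟨c, hc, hhc, hcβ⟩ := (hf.and_eventually (Ioo_mem_nhdsGT hhβ)).exists
  have hzero := (ENNReal.tendsto_ofReal (tendsto_div_rpow_nhdsGT_of_lt hcβ hβ)).limsup_eq
  rw [hc, ENNReal.ofReal_zero] at hzero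
  exact ENNReal.top_ne_zero hzero

theorem stmt13_general {Ω : Type*} [MeasurableSpace Ω] (μ : Measure Ω) [IsProbabilityMeasure μ]
    (Y : ℝ → Ω → ℝ) (t h γ K ε₀ : ℝ)
    (hh : 0 < h) (hγ : h < γ) (hK : 0 < K) (hε₀ : 0 < ε₀)
    (hbound : ∀ r ∈ Ioo (0:ℝ) ε₀, ∀ x > (0:ℝ),
      μ {ω | |Y (t + r) ω - Y t ω| < x} ≤ ENNReal.ofReal (K * x / r ^ h)) :
    ∀ᵐ ω ∂μ,
      (Filter.limsup (fun r => ENNReal.ofReal (|Y (t + r) ω - Y t ω| / r ^ γ))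
        (nhdsWithin 0 (Ioi (0:ℝ))) = ⊤) ∧
      sSup {β : ℝ | Filter.Tendsto (fun r : ℝ => |Y (t + r) ω - Y t ω| / |r| ^ β)
        (nhdsWithin 0 ({0}ᶜ : Set ℝ)) (nhds 0)} ≤ h := by
  have hlimsup : ∀ c > h, ∀ᵐ ω ∂μ,
      limsup (fun r => ENNReal.ofReal (|Y (t + r) ω - Y t ω| / r ^ c)) (𝓝[>] 0) = ∞ :=
    fun c hc => ae_limsup_abs_sub_div_rpow_eq_top hc hK.le hε₀ hbound
  -- `∀ᵐ` commutes only with countable `∀`, so `c ↓ h` runs along a sequence.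
  obtain ⟨c, -, hhc, hc⟩ := exists_seq_strictAnti_tendsto_nhdsWithin h
  have hlimsup_seq := ae_all_iff.2 fun n => hlimsup (c n) (hhc n)
  filter_upwards [hlimsup γ hγ, hlimsup_seq] with ω hγω hω
  exact ⟨hγω, sSup_tendsto_div_rpow_le hh.le (hc.frequently (Frequently.of_forall hω))⟩

theorem stmt13 {Ω : Type*} [MeasurableSpace Ω] (μ : Measure Ω) [IsProbabilityMeasure μ]
    (Y : ℝ → Ω → ℝ) (t h γ K ε₀ : ℝ)
    (hh : 0 < h) (hγ : h < γ) (hK : 0 < K) (hε₀ : 0 < ε₀)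
    (hmeas : ∀ s, Measurable (Y s))
    (hbound : ∀ r ∈ Ioo (0:ℝ) ε₀, ∀ x > (0:ℝ),
      μ {ω | |Y (t + r) ω - Y t ω| < x} ≤ ENNReal.ofReal (K * x / r ^ h)) :
    ∀ᵐ ω ∂μ,
      (Filter.limsup (fun r => ENNReal.ofReal (|Y (t + r) ω - Y t ω| / r ^ γ))
        (nhdsWithin 0 (Ioi (0:ℝ))) = ⊤) ∧
      sSup {β : ℝ | Filter.Tendsto (fun r : ℝ => |Y (t + r) ω - Y t ω| / |r| ^ β)
        (nhdsWithin 0 ({0}ᶜ : Set ℝ)) (nhds 0)} ≤ h :=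
  stmt13_general μ Y t h γ K ε₀ hh hγ hK hε₀ hbound
end
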